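/- arXiv:1401.1161 — 3 statements merged into one kernel-verified Lean document; each statement's English description precedes it below -/
import Mathlib

section
/- Let G be a finite abelian group and let λ be a linking form on G. If S and T are subgroups of G such that λ(s,t) = 0 for all s ∈ S and all t ∈ T, then |S| · |T| ≤ |G|. -/
/-!
Nondegeneracy of `λ` makes `t ↦ λ(·, t)` injective, and orthogonality lets `λ(·, t)` factor through
`G ⧸ S` for `t ∈ T`; so `T` embeds into `Hom(G ⧸ S, ℚ/ℤ)`. Since `ℚ/ℤ` embeds into `ℂˣ` and a finite
abelian group has as many complex characters as elements, `|T| ≤ |G ⧸ S| = |G| / |S|`.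
-/

/-- A linking form on a (finite) abelian group `G`: a `ℚ/ℤ`-valued pairing that is
additive in each variable, symmetric, and nondegenerate. -/
def IsLinkingForm {G : Type*} [AddCommGroup G] (l : G → G → AddCircle (1 : ℚ)) : Prop :=
  (∀ x y z : G, l (x + y) z = l x z + l y z) ∧
  (∀ x y z : G, l x (y + z) = l x y + l x z) ∧
  (∀ x y : G, l x y = l y x) ∧
  (∀ x : G, x ≠ 0 → ∃ y : G, l x y ≠ 0)

open Function

namespace AddCircle

noncomputable def ratCastHom : AddCircle (1 : ℚ) →+ AddCircle (1 : ℝ) :=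
  QuotientAddGroup.map _ _ (Rat.castHom ℝ).toAddMonoidHom <| by
    rintro _ ⟨n, rfl⟩
    exact ⟨n, by simp⟩

lemma ratCastHom_injective : Injective ratCastHom := by
  refine (injective_iff_map_eq_zero _).2 fun x hx => ?_
  induction x using QuotientAddGroup.induction_on with
  | H q =>
    obtain ⟨n, hn⟩ := (coe_eq_zero_iff (1 : ℝ)).1 hx
    exact (coe_eq_zero_iff (1 : ℚ)).2 ⟨n, by
      simpa using Rat.cast_injective (α := ℝ) (by simpa using hn)⟩

noncomputable def ratAddChar : AddChar (AddCircle (1 : ℚ)) ℂ :=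
  Circle.coeHom.compAddChar (toCircle_addChar.compAddMonoidHom ratCastHom)

lemma ratAddChar_injective : Injective ratAddChar :=
  Subtype.coe_injective.comp <| (injective_toCircle one_ne_zero).comp ratCastHom_injective

end AddCircle

section Dual

variable {A C : Type*} [AddCommGroup A] [AddCommGroup C] {ψ : AddChar C ℂ}

lemma AddChar.compAddMonoidHom_left_injective (hψ : Injective ψ) :
    Injective fun c : A →+ C => ψ.compAddMonoidHom c :=
  fun _ _ h => AddMonoidHom.ext fun a => hψ (DFunLike.congr_fun h a)

lemma finite_addMonoidHom_of_injective_addChar [Finite A] (hψ : Injective ψ) : Finite (A →+ C) :=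
  Finite.of_injective _ (AddChar.compAddMonoidHom_left_injective hψ)

lemma card_addMonoidHom_le_of_injective_addChar [Finite A] (hψ : Injective ψ) :
    Nat.card (A →+ C) ≤ Nat.card A := by
  have := Fintype.ofFinite A
  calc Nat.card (A →+ C) ≤ Nat.card (AddChar A ℂ) :=
        Nat.card_le_card_of_injective _ (AddChar.compAddMonoidHom_left_injective hψ)
    _ = Nat.card A := by simp only [Nat.card_eq_fintype_card, AddChar.card_eq]

end Dual

section Pairing

variable {G H C : Type*} [AddCommGroup G] [AddCommGroup H] [AddCommGroup C]

lemma card_le_card_quotient_of_pairing_eq_zero [Finite G] (B : G →+ H →+ C)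
    (hB : Injective B.flip) {ψ : AddChar C ℂ} (hψ : Injective ψ) {S : AddSubgroup G}
    {T : AddSubgroup H} (h : ∀ s ∈ S, ∀ t ∈ T, B s t = 0) :
    Nat.card T ≤ Nat.card (G ⧸ S) := by
  let f : T → (G ⧸ S →+ C) := fun t => QuotientAddGroup.lift S (B.flip t) fun s hs => h s hs t t.2
  have hf : Injective f := fun t t' htt =>
    Subtype.ext <| hB <| AddMonoidHom.ext fun x => DFunLike.congr_fun htt (x : G ⧸ S)
  have := finite_addMonoidHom_of_injective_addChar (A := G ⧸ S) hψ
  exact (Nat.card_le_card_of_injective f hf).trans (card_addMonoidHom_le_of_injective_addChar hψ)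

end Pairing

namespace IsLinkingForm

variable {G : Type*} [AddCommGroup G] {l : G → G → AddCircle (1 : ℚ)}

def toAddMonoidHom (hl : IsLinkingForm l) : G →+ G →+ AddCircle (1 : ℚ) :=
  AddMonoidHom.mk' (fun x => AddMonoidHom.mk' (l x) (hl.2.1 x)) fun x y =>
    AddMonoidHom.ext (hl.1 x y)

lemma flip_toAddMonoidHom_injective (hl : IsLinkingForm l) :
    Injective hl.toAddMonoidHom.flip := by
  refine (injective_iff_map_eq_zero _).2 fun t ht => ?_
  by_contra hne
  obtain ⟨y, hy⟩ := hl.2.2.2 t hne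
  exact hy (by rw [hl.2.2.1]; exact DFunLike.congr_fun ht y)

end IsLinkingForm

/-- If `λ(s,t) = 0` for all `s ∈ S`, `t ∈ T`, then `|S| ⬝ |T| ≤ |G|`. -/
theorem stmt0 {G : Type*} [AddCommGroup G] [Finite G]
    (l : G → G → AddCircle (1 : ℚ)) (hl : IsLinkingForm l)
    (S T : AddSubgroup G)
    (h : ∀ s ∈ S, ∀ t ∈ T, l s t = 0) :
    Nat.card S * Nat.card T ≤ Nat.card G :=
  calc Nat.card S * Nat.card T ≤ Nat.card S * Nat.card (G ⧸ S) :=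
        Nat.mul_le_mul_left _ <| card_le_card_quotient_of_pairing_eq_zero hl.toAddMonoidHom
          hl.flip_toAddMonoidHom_injective AddCircle.ratAddChar_injective h
    _ = Nat.card G := by rw [mul_comm, ← AddSubgroup.card_eq_card_quotient_mul_card_addSubgroup]
end

section
/- Let p be a prime, A a finite abelian group with r_p(A) ≥ 2, and f : A → ℚ a function. Suppose S_H(f) ≤ 0 for every H ∈ 𝒢_p(A), and S_H(f) = 0 for at most one H ∈ 𝒢_p(A). Then for every integer n ≥ 1 there do not exist subgroups G and H of A^n with G ∩ H = {0}, G + H = A^n, G isomorphic to H as abelian groups, and f^{(n)}(x) = 0 for every x ∈ G ∪ H. -/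
open scoped BigOperators

/-- The `p`-torsion subgroup `{a ∈ A : p • a = 0}`. -/
def torsionSubgroup (n : ℕ) (A : Type*) [AddCommGroup A] : AddSubgroup A where
  carrier := {a : A | n • a = 0}
  zero_mem' := smul_zero n
  add_mem' := by
    intro a b ha hb
    simp only [Set.mem_setOf_eq] at *
    rw [smul_add, ha, hb, add_zero]
  neg_mem' := by
    intro a ha
    simp only [Set.mem_setOf_eq] at *
    rw [smul_neg, ha, neg_zero]

/-- `rp p A` is the number of cyclic factors of `p`-power order in a decomposition of
`A` into cyclic groups of prime-power order; equivalently, the `𝔽_p`-dimension of the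
`p`-torsion subgroup of `A`, i.e. the exponent of `p` in its cardinality. -/
noncomputable def rp (p : ℕ) (A : Type*) [AddCommGroup A] : ℕ :=
  (Nat.card (torsionSubgroup p A)).factorization p

/-- `SH K f = Σ_{h ∈ K} f h`. -/
noncomputable def SH {A : Type*} [AddCommGroup A] (K : AddSubgroup A) (f : A → ℚ) : ℚ :=
  ∑ᶠ h ∈ (K : Set A), f h

/-! If `x ∈ G ∪ H` is killed by `p`, summing `f^{(n)}` over the multiples `k • x`, `k < p`, gives
`Σ_i S_{⟨x i⟩}(f) = 0` (with `f 0 = 0`), a sum of nonpositive terms; so every nonzero coordinate of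
`x` generates an order-`p` subgroup on which `S` vanishes. Splitting `(c, 0, …, 0) = g + h` along
`G ⊕ H`, with `g, h` killed by `p` because `p • g = -(p • h) ∈ G ⊓ H`, writes any `p`-torsion `c`
as a sum of two such coordinates. As at most one such subgroup exists, it contains the whole
`p`-torsion of `A`, whence `r_p(A) ≤ 1`. -/

open AddSubgroup Finset

section

variable {A : Type*} [AddCommGroup A] {p : ℕ} [hp : Fact p.Prime]

theorem SH_zmultiples_eq_sum_range {a : A} (ha : IsOfFinAddOrder a) (f : A → ℚ) :
    SH (zmultiples a) f = ∑ k ∈ range (addOrderOf a), f (k • a) := by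
  classical
  have hset : (zmultiples a : Set A) = ↑((range (addOrderOf a)).image (· • a)) := by
    ext y
    simpa [Set.mem_image] using ha.mem_zmultiples_iff_mem_range_addOrderOf (y := y)
  rw [SH, hset, finsum_mem_coe_finset, sum_image]
  intro j hj k hk hjk
  exact nsmul_injOn_Iio_addOrderOf (by simpa using hj) (by simpa using hk) hjk

theorem exists_add_eq_of_inf_eq_bot_of_nsmul_eq_zero {G H : AddSubgroup A} (hGH : G ⊓ H = ⊥)
    {y : A} (hy : y ∈ G ⊔ H) {n : ℕ} (hn : n • y = 0) :
    ∃ g ∈ G, ∃ h ∈ H, n • g = 0 ∧ n • h = 0 ∧ g + h = y := by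
  obtain ⟨g, hg, h, hh, rfl⟩ := mem_sup.mp hy
  have hng : n • g = 0 := by
    refine disjoint_def.mp (disjoint_iff.mpr hGH) (nsmul_mem hg n) ?_
    rw [eq_neg_of_add_eq_zero_left ((smul_add n g h).symm.trans hn)]
    exact neg_mem (nsmul_mem hh n)
  refine ⟨g, hg, h, hh, hng, ?_, rfl⟩
  rwa [smul_add, hng, zero_add] at hn

theorem card_zmultiples_of_nsmul_eq_zero {a : A} (ha : p • a = 0) (ha0 : a ≠ 0) :
    Nat.card (zmultiples a) = p := by
  rw [Nat.card_zmultiples, addOrderOf_eq_prime ha ha0]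

theorem sum_range_nsmul_eq_SH_zmultiples {a : A} (ha : p • a = 0) (ha0 : a ≠ 0) (f : A → ℚ) :
    ∑ k ∈ range p, f (k • a) = SH (zmultiples a) f := by
  have hord := addOrderOf_eq_prime ha ha0
  rw [SH_zmultiples_eq_sum_range (addOrderOf_pos_iff.mp (hord ▸ hp.out.pos)), hord]

theorem sum_range_nsmul_nonpos {f : A → ℚ}
    (hle : ∀ K : AddSubgroup A, Nat.card K = p → SH K f ≤ 0) (hf0 : f 0 = 0)
    {a : A} (ha : p • a = 0) : ∑ k ∈ range p, f (k • a) ≤ 0 := by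
  rcases eq_or_ne a 0 with rfl | ha0
  · simp [hf0]
  · rw [sum_range_nsmul_eq_SH_zmultiples ha ha0]
    exact hle _ (card_zmultiples_of_nsmul_eq_zero ha ha0)

theorem coord_eq_zero_or_zmultiples_mem {ι : Type*} [Fintype ι] {f : A → ℚ}
    (hle : ∀ K : AddSubgroup A, Nat.card K = p → SH K f ≤ 0)
    {V : AddSubgroup (ι → A)} (hV : ∀ x ∈ V, ∑ i, f (x i) = 0)
    {x : ι → A} (hx : x ∈ V) (hpx : p • x = 0) (i : ι) :
    x i = 0 ∨ zmultiples (x i) ∈ {K : AddSubgroup A | Nat.card K = p ∧ SH K f = 0} := by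
  have hf0 : f 0 = 0 := by
    have h := hV 0 (zero_mem V)
    simp only [Pi.zero_apply, sum_const, card_univ, nsmul_eq_mul, mul_eq_zero] at h
    exact h.resolve_left (Nat.cast_ne_zero.mpr (Fintype.card_pos_iff.mpr ⟨i⟩).ne')
  have hcoord : ∀ j, p • x j = 0 := fun j => by simpa using congrFun hpx j
  have hsum : ∑ j, ∑ k ∈ range p, f (k • x j) = 0 := by
    rw [sum_comm]
    exact sum_eq_zero fun k _ => by simpa using hV _ (nsmul_mem hx k)
  have hi := (sum_eq_zero_iff_of_nonpos fun j _ => sum_range_nsmul_nonpos hle hf0 (hcoord j)).mp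
    hsum i (mem_univ i)
  refine (eq_or_ne (x i) 0).imp id fun hi0 => ?_
  rw [sum_range_nsmul_eq_SH_zmultiples (hcoord i) hi0] at hi
  exact ⟨card_zmultiples_of_nsmul_eq_zero (hcoord i) hi0, hi⟩

theorem add_eq_zero_or_zmultiples_mem {Z : Set (AddSubgroup A)} (hZ : Z.Subsingleton)
    (hcard : ∀ K ∈ Z, Nat.card K = p) {u v : A}
    (hu : u = 0 ∨ zmultiples u ∈ Z) (hv : v = 0 ∨ zmultiples v ∈ Z) :
    u + v = 0 ∨ zmultiples (u + v) ∈ Z := by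
  rcases hu with rfl | hu
  · simpa using hv
  rcases hv with rfl | hv
  · simpa using Or.inr hu
  have hmem : u + v ∈ zmultiples u := add_mem (mem_zmultiples u) (hZ hv hu ▸ mem_zmultiples v)
  refine (eq_or_ne (u + v) 0).imp id fun huv => ?_
  have : Finite (zmultiples u) := Nat.finite_of_card_ne_zero (hcard _ hu ▸ hp.out.ne_zero)
  have hp_uv : p • (u + v) = 0 := by
    simpa [hcard _ hu] using congrArg Subtype.val (card_nsmul_eq_zero' (x := ⟨u + v, hmem⟩))
  suffices zmultiples (u + v) = zmultiples u by rwa [this]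
  apply eq_of_le_of_card_ge (zmultiples_le.mpr hmem)
  rw [card_zmultiples_of_nsmul_eq_zero hp_uv huv, hcard _ hu]

theorem rp_le_one_of_subsingleton {Z : Set (AddSubgroup A)} (hZ : Z.Subsingleton)
    (hcard : ∀ K ∈ Z, Nat.card K = p) (h : ∀ c : A, p • c = 0 → c = 0 ∨ zmultiples c ∈ Z) :
    rp p A ≤ 1 := by
  suffices Nat.card (torsionSubgroup p A) ∣ p from
    Nat.factorization_le_of_le_pow (by simpa using Nat.le_of_dvd hp.out.pos this)
  rcases (torsionSubgroup p A).bot_or_exists_ne_zero with hT | ⟨c, hc, hc0⟩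
  · simp [hT]
  have hcZ := (h c hc).resolve_left hc0
  refine (card_dvd_of_le fun d hd => ?_).trans (hcard _ hcZ).dvd
  rcases h d hd with rfl | hdZ
  · exact zero_mem _
  · exact hZ hdZ hcZ ▸ mem_zmultiples d

end

theorem stmt11_general {A : Type*} [AddCommGroup A]
    (p : ℕ) (hp : p.Prime) (hrp : 2 ≤ rp p A)
    (f : A → ℚ)
    (hle : ∀ K : AddSubgroup A, Nat.card K = p → SH K f ≤ 0)
    (hone : {K : AddSubgroup A | Nat.card K = p ∧ SH K f = 0}.Subsingleton) :
    ∀ n : ℕ, 1 ≤ n →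
      ¬ ∃ (G H : AddSubgroup (Fin n → A)),
          G ⊓ H = ⊥ ∧ G ⊔ H = ⊤ ∧ Nonempty (G ≃+ H) ∧
          (∀ x : Fin n → A, (x ∈ G ∨ x ∈ H) → ∑ i, f (x i) = 0) := by
  rintro n hn ⟨G, H, hGH, hGH_top, -, hzero⟩
  have : Fact p.Prime := ⟨hp⟩
  let i₀ : Fin n := ⟨0, hn⟩
  have hline : ∀ c : A, p • c = 0 →
      c = 0 ∨ zmultiples c ∈ {K : AddSubgroup A | Nat.card K = p ∧ SH K f = 0} := by
    intro c hc
    obtain ⟨g, hg, h, hh, hpg, hph, hgh⟩ := exists_add_eq_of_inf_eq_bot_of_nsmul_eq_zero hGH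
      (hGH_top ▸ mem_top (Pi.single i₀ c)) (by rw [← Pi.single_smul, hc, Pi.single_zero])
    have hc_eq : g i₀ + h i₀ = c := by simpa using congrFun hgh i₀
    rw [← hc_eq]
    exact add_eq_zero_or_zmultiples_mem hone (fun K hK => hK.1)
      (coord_eq_zero_or_zmultiples_mem hle (fun x hx => hzero x (.inl hx)) hg hpg i₀)
      (coord_eq_zero_or_zmultiples_mem hle (fun x hx => hzero x (.inr hx)) hh hph i₀)
  exact (rp_le_one_of_subsingleton hone (fun K hK => hK.1) hline).not_gt hrp

/-- If `r_p(A) ≥ 2`, `S_K(f) ≤ 0` for all order-`p` subgroups `K`, with equality for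
at most one such `K`, then for no `n ≥ 1` does `A^n` admit a splitting `G ⊕ H` with
`G ≅ H` and `f^{(n)}` vanishing on `G ∪ H`. -/
theorem stmt11 {A : Type*} [AddCommGroup A] [Finite A]
    (p : ℕ) (hp : p.Prime) (hrp : 2 ≤ rp p A)
    (f : A → ℚ)
    (hle : ∀ K : AddSubgroup A, Nat.card K = p → SH K f ≤ 0)
    (hone : {K : AddSubgroup A | Nat.card K = p ∧ SH K f = 0}.Subsingleton) :
    ∀ n : ℕ, 1 ≤ n →
      ¬ ∃ (G H : AddSubgroup (Fin n → A)),
          G ⊓ H = ⊥ ∧ G ⊔ H = ⊤ ∧ Nonempty (G ≃+ H) ∧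
          (∀ x : Fin n → A, (x ∈ G ∨ x ∈ H) → ∑ i, f (x i) = 0) :=
  stmt11_general p hp hrp f hle hone
end

section
/- Let p be an odd prime. Define D : ℤ/pℤ → ℚ by D(i) = ((2·ī − p)² − p)/(4p), where ī ∈ {0, 1, …, p−1} is the canonical representative of i. Then for every a ∈ ℤ/pℤ, the sum Σ_{m ∈ ℤ/pℤ} (D(m·a) − D(m·(a+1))) equals (p² − 1)/6 if a = 0, equals −(p² − 1)/6 if a = −1, and equals 0 otherwise. -/
open scoped BigOperators

/-- `D i = ((2·ī − p)² − p)/(4p)` where `ī ∈ {0, …, p−1}` is the canonical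
representative of `i ∈ ℤ/pℤ`. -/
noncomputable def lensD (p : ℕ) (i : ZMod p) : ℚ :=
  ((2 * (i.val : ℚ) - p) ^ 2 - p) / (4 * p)

/-!
Multiplication by a nonzero `a` permutes `ℤ/pℤ`, so `∑ₘ D(m·a)` is the full sum `S = ∑ᵢ D(i)`
unless `a = 0`, when it is `p·D(0) = p(p − 1)/4`. Hence the sum vanishes unless `a = 0` or
`a + 1 = 0`, where it is `±(p·D(0) − S)`; summing the quadratic `D` over `0, …, p − 1` gives
`S = (p − 1)(p − 2)/12`, and `p(p − 1)/4 − (p − 1)(p − 2)/12 = (p² − 1)/6`.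
-/

open Finset

lemma Finset.sum_range_cast_id (n : ℕ) : ∑ i ∈ range n, (i : ℚ) = n * (n - 1) / 2 := by
  induction n with
  | zero => simp
  | succ k ih => rw [sum_range_succ, ih]; push_cast; ring

lemma Finset.sum_range_cast_sq (n : ℕ) :
    ∑ i ∈ range n, (i : ℚ) ^ 2 = n * (n - 1) * (2 * n - 1) / 6 := by
  induction n with
  | zero => simp
  | succ k ih => rw [sum_range_succ, ih]; push_cast; ring

lemma ZMod.sum_comp_val {M : Type*} [AddCommMonoid M] (n : ℕ) [NeZero n] (f : ℕ → M) :
    ∑ m : ZMod n, f m.val = ∑ i ∈ range n, f i := by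
  obtain ⟨k, rfl⟩ := Nat.exists_eq_succ_of_ne_zero (NeZero.ne n)
  exact Fin.sum_univ_eq_sum_range f (k + 1)

lemma Fintype.sum_comp_mul_right {G₀ M : Type*} [GroupWithZero G₀] [Fintype G₀] [DecidableEq G₀]
    [AddCommMonoid M] (f : G₀ → M) (a : G₀) :
    ∑ m, f (m * a) = if a = 0 then Fintype.card G₀ • f 0 else ∑ m, f m := by
  split_ifs with ha
  · simp [ha]
  · exact Equiv.sum_comp (Equiv.mulRight₀ a ha) f

lemma lensD_zero (p : ℕ) [NeZero p] : lensD p 0 = ((p : ℚ) - 1) / 4 := by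
  have hp : (p : ℚ) ≠ 0 := Nat.cast_ne_zero.mpr (NeZero.ne p)
  simp only [lensD, ZMod.val_zero, Nat.cast_zero, mul_zero, zero_sub, neg_sq]
  field_simp

lemma sum_lensD (p : ℕ) [NeZero p] :
    ∑ m : ZMod p, lensD p m = ((p : ℚ) - 1) * ((p : ℚ) - 2) / 12 := by
  have hp : (p : ℚ) ≠ 0 := Nat.cast_ne_zero.mpr (NeZero.ne p)
  have expand (i : ℕ) : ((2 * (i : ℚ) - p) ^ 2 - p) / (4 * p)
      = (4 * (i : ℚ) ^ 2 - 4 * p * i + (p ^ 2 - p)) / (4 * p) := by ring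
  simp only [lensD]
  rw [ZMod.sum_comp_val p (fun i => ((2 * (i : ℚ) - p) ^ 2 - p) / (4 * p))]
  simp only [expand, ← sum_div, sum_add_distrib, sum_sub_distrib, ← mul_sum, sum_const,
    card_range, nsmul_eq_mul, sum_range_cast_sq, sum_range_cast_id]
  field_simp
  ring

theorem stmt12_general (p : ℕ) (hp : p.Prime) [NeZero p] :
    ∀ a : ZMod p,
      (∑ m : ZMod p, (lensD p (m * a) - lensD p (m * (a + 1)))) =
        if a = 0 then ((p : ℚ) ^ 2 - 1) / 6
        else if a = -1 then -(((p : ℚ) ^ 2 - 1) / 6)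
        else 0 := by
  intro a
  have : Fact p.Prime := ⟨hp⟩
  rw [sum_sub_distrib, Fintype.sum_comp_mul_right, Fintype.sum_comp_mul_right, ZMod.card,
    lensD_zero, sum_lensD, nsmul_eq_mul]
  simp only [add_eq_zero_iff_eq_neg]
  split_ifs with h0 h1 h1
  · exact absurd (h0.symm.trans h1) (by simp)
  · ring
  · ring
  · ring

/-- For an odd prime `p` and `a ∈ ℤ/pℤ`, the sum `Σ_m (D(m·a) − D(m·(a+1)))` equals
`(p² − 1)/6` if `a = 0`, `−(p² − 1)/6` if `a = −1`, and `0` otherwise. -/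
theorem stmt12 (p : ℕ) (hp : p.Prime) (hodd : Odd p) [NeZero p] :
    ∀ a : ZMod p,
      (∑ m : ZMod p, (lensD p (m * a) - lensD p (m * (a + 1)))) =
        if a = 0 then ((p : ℚ) ^ 2 - 1) / 6
        else if a = -1 then -(((p : ℚ) ^ 2 - 1) / 6)
        else 0 :=
  stmt12_general p hp
end
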